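/- Let G_γ^odd(x,y) = (1/(2γ))(e^{-γ|x-y|} - e^{-γ|x+y|}) for x, y ≥ 0 and Re γ > 0. Then there exists C > 0 such that for any integrable odd function f with ∫_ℝ (1+y²)^{1/2}|f(y)| dy < ∞, the function u(x) = ∫₀^∞ G_γ^odd(x,y) f(y) dy satisfies ∫_ℝ |u(x)| dx ≤ (C/|γ|) ∫_ℝ (1+y²)^{1/2} |f(y)| dy, for all γ with Re γ ≥ (1/2)|Im γ|. -/

import Mathlib

/-!
By the mean value theorem `|e^{-γa} - e^{-γb}| ≤ |γ| |a - b| (e^{-Re γ a} + e^{-Re γ b})`, and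
`||x + y| - |x - y|| ≤ 2y`; the factor `|γ|` cancels the prefactor `1 / (2γ)`, so
`|Godd γ x y| ≤ y (e^{-Re γ |x-y|} + e^{-Re γ |x+y|})`. This bound integrates in `x` to
`4y / Re γ`, so Fubini (Schur's test in `L¹`) bounds `‖u‖₁` by `(4 / Re γ) ∫ ⟨y⟩ |f|`, and in the
sector `Re γ ≥ |Im γ| / 2` one has `|γ| ≤ 3 Re γ`.
-/

open MeasureTheory

/-- Green's function of `(∂ₓₓ - γ²)⁻¹` on odd functions, for `x, y ≥ 0`. -/
noncomputable def Godd (γ : ℂ) (x y : ℝ) : ℂ :=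
  (1 / (2 * γ)) * (Complex.exp (-γ * (|x - y| : ℝ)) - Complex.exp (-γ * (|x + y| : ℝ)))

open Set Real

theorem integral_norm_integral_le_of_norm_le
    {α β E : Type*} [MeasurableSpace α] [MeasurableSpace β]
    [NormedAddCommGroup E] [NormedSpace ℝ E]
    {μ : Measure α} {ν : Measure β} [SFinite μ] [SFinite ν]
    {F : α → β → E} {k : α → β → ℝ} {w : β → ℝ}
    (hk : AEStronglyMeasurable (Function.uncurry k) (μ.prod ν))
    (hk_nonneg : ∀ᵐ y ∂ν, ∀ x, 0 ≤ k x y)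
    (hFk : ∀ x, ∀ᵐ y ∂ν, ‖F x y‖ ≤ k x y)
    (hk_int : ∀ᵐ y ∂ν, Integrable (k · y) μ)
    (hk_le : ∀ᵐ y ∂ν, ∫ x, k x y ∂μ ≤ w y)
    (hw : Integrable w ν) :
    ∫ x, ‖∫ y, F x y ∂ν‖ ∂μ ≤ ∫ y, w y ∂ν := by
  have hk_prod : Integrable (Function.uncurry k) (μ.prod ν) := by
    refine (integrable_prod_iff' hk).2 ⟨hk_int, hw.mono' hk.norm.prod_swap.integral_prod_right' ?_⟩
    filter_upwards [hk_nonneg, hk_le] with y h0 hle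
    simp only [Function.uncurry_apply_pair, Real.norm_of_nonneg (h0 _)]
    rwa [Real.norm_of_nonneg (integral_nonneg h0)]
  calc ∫ x, ‖∫ y, F x y ∂ν‖ ∂μ ≤ ∫ x, ∫ y, k x y ∂ν ∂μ := by
        refine integral_mono_of_nonneg (ae_of_all _ fun _ => norm_nonneg _)
          hk_prod.integral_prod_left ?_
        filter_upwards [hk_prod.prod_right_ae] with x hx
        exact norm_integral_le_of_norm_le hx (hFk x)
    _ = ∫ y, ∫ x, k x y ∂μ ∂ν := integral_integral_swap hk_prod
    _ ≤ ∫ y, w y ∂ν := integral_mono_ae hk_prod.integral_prod_right hw hk_le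

section ExpAbs

variable {r : ℝ}

theorem integral_exp_neg_mul_abs (hr : 0 < r) : ∫ x, exp (-r * |x|) = 2 / r := by
  rw [integral_comp_abs (f := fun t => exp (-r * t)), integral_exp_mul_Ioi (neg_lt_zero.2 hr)]
  simp only [mul_zero, exp_zero]
  ring

theorem integrable_exp_neg_mul_abs (hr : 0 < r) : Integrable fun x => exp (-r * |x|) :=
  .of_integral_ne_zero (by rw [integral_exp_neg_mul_abs hr]; positivity)

theorem integrable_exp_neg_mul_abs_sub_add_exp_neg_mul_abs_add (hr : 0 < r) (y : ℝ) :
    Integrable fun x => exp (-r * |x - y|) + exp (-r * |x + y|) :=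
  ((integrable_exp_neg_mul_abs hr).comp_sub_right y).add
    ((integrable_exp_neg_mul_abs hr).comp_add_right y)

theorem integral_exp_neg_mul_abs_sub_add_exp_neg_mul_abs_add (hr : 0 < r) (y : ℝ) :
    ∫ x, (exp (-r * |x - y|) + exp (-r * |x + y|)) = 4 / r := by
  rw [integral_add ((integrable_exp_neg_mul_abs hr).comp_sub_right y)
      ((integrable_exp_neg_mul_abs hr).comp_add_right y),
    integral_sub_right_eq_self (fun x => exp (-r * |x|)),
    integral_add_right_eq_self (fun x => exp (-r * |x|)), integral_exp_neg_mul_abs hr]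
  ring

end ExpAbs

theorem norm_cexp_neg_mul_sub_le_of_le {γ : ℂ} (hγ : 0 ≤ γ.re) {a b : ℝ} (hab : a ≤ b) :
    ‖Complex.exp (-γ * b) - Complex.exp (-γ * a)‖ ≤ ‖γ‖ * exp (-γ.re * a) * (b - a) := by
  refine norm_image_sub_le_of_norm_deriv_le_segment' (f := fun t : ℝ => Complex.exp (-γ * t))
    (f' := fun t => Complex.exp (-γ * t) * (-γ)) (fun t _ => ?_) (fun t ht => ?_) b
    (right_mem_Icc.2 hab)
  · have := ((hasDerivAt_id (t : ℂ)).const_mul (-γ)).cexp.comp_ofReal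
    simp only [id, mul_one] at this
    exact this.hasDerivWithinAt
  · rw [norm_mul, norm_neg, Complex.norm_exp, mul_comm]
    gcongr
    simpa using mul_le_mul_of_nonneg_left ht.1 hγ

theorem norm_cexp_neg_mul_sub_le {γ : ℂ} (hγ : 0 ≤ γ.re) (a b : ℝ) :
    ‖Complex.exp (-γ * a) - Complex.exp (-γ * b)‖ ≤
      ‖γ‖ * |a - b| * (exp (-γ.re * a) + exp (-γ.re * b)) := by
  rcases le_total a b with hab | hab
  · rw [norm_sub_rev, abs_sub_comm, abs_of_nonneg (sub_nonneg.2 hab)]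
    nlinarith [norm_cexp_neg_mul_sub_le_of_le hγ hab,
      mul_nonneg (mul_nonneg (norm_nonneg γ) (sub_nonneg.2 hab)) (exp_pos (-γ.re * b)).le]
  · rw [abs_of_nonneg (sub_nonneg.2 hab)]
    nlinarith [norm_cexp_neg_mul_sub_le_of_le hγ hab,
      mul_nonneg (mul_nonneg (norm_nonneg γ) (sub_nonneg.2 hab)) (exp_pos (-γ.re * a)).le]

theorem norm_Godd_le {γ : ℂ} (hγ : 0 ≤ γ.re) (x : ℝ) {y : ℝ} (hy : 0 ≤ y) :
    ‖Godd γ x y‖ ≤ y * (exp (-γ.re * |x - y|) + exp (-γ.re * |x + y|)) := by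
  rcases eq_or_ne γ 0 with rfl | hγ0
  · simp only [Godd, mul_zero, div_zero, zero_mul, norm_zero]
    positivity
  have hdiff : abs (|x - y| - |x + y|) ≤ 2 * y :=
    (abs_abs_sub_abs_le_abs_sub _ _).trans_eq <| by
      rw [show x - y - (x + y) = -(2 * y) by ring, abs_neg, abs_of_nonneg (by positivity)]
  calc ‖Godd γ x y‖
      = ‖Complex.exp (-γ * |x - y|) - Complex.exp (-γ * |x + y|)‖ / (2 * ‖γ‖) := by
        simp [Godd, div_eq_inv_mul]
    _ ≤ ‖γ‖ * (2 * y) * (exp (-γ.re * |x - y|) + exp (-γ.re * |x + y|)) / (2 * ‖γ‖) := by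
        gcongr
        exact (norm_cexp_neg_mul_sub_le hγ _ _).trans (by gcongr)
    _ = y * (exp (-γ.re * |x - y|) + exp (-γ.re * |x + y|)) := by
        field_simp

theorem Complex.re_pos_of_abs_im_le {γ : ℂ} (hγ : γ ≠ 0) (h : 1 / 2 * |γ.im| ≤ γ.re) :
    0 < γ.re := by
  refine (le_trans (by positivity) h).lt_of_ne fun hre => hγ (Complex.ext hre.symm ?_)
  simpa using (abs_nonpos_iff (a := γ.im)).1 (by linarith)

theorem Complex.norm_le_three_mul_re {γ : ℂ} (h : 1 / 2 * |γ.im| ≤ γ.re) :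
    ‖γ‖ ≤ 3 * γ.re := by
  have := Complex.norm_le_abs_re_add_abs_im γ
  rw [abs_of_nonneg (le_trans (by positivity) h)] at this
  linarith

theorem integral_norm_integral_Godd_mul_le {γ : ℂ} (hγ : 0 < γ.re) {f : ℝ → ℂ}
    (hf : AEStronglyMeasurable f) (hfw : Integrable fun y => √(1 + y ^ 2) * ‖f y‖) :
    ∫ x, ‖∫ y in Ioi 0, Godd γ x y * f y‖ ≤
      4 / γ.re * ∫ y in Ioi 0, √(1 + y ^ 2) * ‖f y‖ := by
  rw [← integral_const_mul]
  refine integral_norm_integral_le_of_norm_le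
    (k := fun x y => y * (exp (-γ.re * |x - y|) + exp (-γ.re * |x + y|)) * ‖f y‖)
    ((Continuous.aestronglyMeasurable (by fun_prop)).mul hf.norm.restrict.comp_snd)
    ?_ (fun x => ?_) (ae_of_all _ fun y => ?_) ?_ (hfw.const_mul _).restrict
  · filter_upwards [ae_restrict_mem measurableSet_Ioi] with y (hy : 0 < y) x
    positivity
  · filter_upwards [ae_restrict_mem measurableSet_Ioi] with y (hy : 0 < y)
    rw [norm_mul]
    exact mul_le_mul_of_nonneg_right (norm_Godd_le hγ.le x hy.le) (norm_nonneg _)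
  · exact ((integrable_exp_neg_mul_abs_sub_add_exp_neg_mul_abs_add hγ y).const_mul y).mul_const _
  · filter_upwards [ae_restrict_mem measurableSet_Ioi] with y (hy : 0 < y)
    rw [integral_mul_const, integral_const_mul,
      integral_exp_neg_mul_abs_sub_add_exp_neg_mul_abs_add hγ y, mul_comm y, mul_assoc]
    gcongr
    exact le_sqrt_of_sq_le (by linarith)

theorem stmt_4 :
    ∃ C > (0:ℝ), ∀ γ : ℂ, γ ≠ 0 → (1 / 2) * |γ.im| ≤ γ.re →
      ∀ f : ℝ → ℂ, (∀ y, f (-y) = -f y) → Integrable f →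
        Integrable (fun y => Real.sqrt (1 + y ^ 2) * ‖f y‖) →
        (∫ x : ℝ, ‖∫ y in Set.Ioi (0:ℝ), Godd γ x y * f y‖) ≤
          (C / ‖γ‖) * ∫ y : ℝ, Real.sqrt (1 + y ^ 2) * ‖f y‖ := by
  refine ⟨12, by norm_num, fun γ hγ hsector f _ hf hfw => ?_⟩
  have hre := Complex.re_pos_of_abs_im_le hγ hsector
  calc ∫ x, ‖∫ y in Ioi 0, Godd γ x y * f y‖
      ≤ 4 / γ.re * ∫ y in Ioi 0, √(1 + y ^ 2) * ‖f y‖ :=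
        integral_norm_integral_Godd_mul_le hre hf.1 hfw
    _ ≤ 4 / γ.re * ∫ y, √(1 + y ^ 2) * ‖f y‖ := by
        gcongr
        exacts [ae_of_all _ fun y => by positivity, Measure.restrict_le_self]
    _ ≤ 12 / ‖γ‖ * ∫ y, √(1 + y ^ 2) * ‖f y‖ := by
        gcongr ?_ * _
        rw [div_le_div_iff₀ hre (norm_pos_iff.2 hγ)]
        linarith [Complex.norm_le_three_mul_re hsector]
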